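/- arXiv:1207.6945 — 3 statements merged into one kernel-verified Lean document; each statement's English description precedes it below -/
import Mathlib

section
/- Let n, ℓ : ℕ, let W : Fin n → Fin ℓ → Bool be a codebook, let S ⊆ Fin n be nonempty, and let i₀ ∈ S. Then a word w : Fin ℓ → Bool belongs to the feasible set F(W_S) if and only if for every critical position j ∈ Crit(W_S) one has w j = W i₀ j. -/
/-- Feasibility of a word w.r.t. the coalition `S`'s codewords is equivalent to
agreement with the common bit on every critical position. -/
theorem feasible_iff_agree_on_critical
    (n ℓ : ℕ) (W : Fin n → Fin ℓ → Bool) (S : Set (Fin n)) (hS : S.Nonempty)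
    (i₀ : Fin n) (hi₀ : i₀ ∈ S) (w : Fin ℓ → Bool) :
    (∀ j : Fin ℓ, ∃ i ∈ S, w j = W i j) ↔
      (∀ j : Fin ℓ, (∀ i ∈ S, ∀ i' ∈ S, W i j = W i' j) → w j = W i₀ j) := by
  constructor
  · intro h j hcrit
    obtain ⟨i, hiS, hwi⟩ := h j
    rw [hwi]
    exact hcrit i hiS i₀ hi₀
  · intro h j
    by_cases hc : ∀ i ∈ S, ∀ i' ∈ S, W i j = W i' j
    · exact ⟨i₀, hi₀, h j hc⟩
    · push_neg at hc
      obtain ⟨i, hiS, i', hi'S, hne⟩ := hc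
      rcases Bool.eq_or_eq_not (w j) (W i j) with he | he
      · exact ⟨i, hiS, he⟩
      · refine ⟨i', hi'S, ?_⟩
        rw [he]
        revert hne; cases W i j <;> cases W i' j <;> simp
end

section
/- Let ℓ, q : ℕ with ℓ ≥ 1. For a message vector b : Fin q → Bool, define μ_b : PMF (Fin q → Fin ℓ × Bool) as follows: sample u uniformly from Fin ℓ → Bool and, independently, r uniformly from Fin q → Fin ℓ, and output the function fun j => (r j, xor (u (r j)) (b j)). Then for all b, b' : Fin q → Bool and every set T ⊆ (Fin q → Fin ℓ × Bool), |μ_b(T) − μ_{b'}(T)| ≤ q² / ℓ, where μ(T) denotes the probability μ assigns to T. -/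
open scoped ENNReal

lemma uniform_bind_comp_equiv {α β : Type*} [Fintype α] [Nonempty α] (e : α ≃ α) (f : α → PMF β) :
    (PMF.uniformOfFintype α).bind (fun a => f (e a)) = (PMF.uniformOfFintype α).bind f := by
  ext x
  simp only [PMF.bind_apply, PMF.uniformOfFintype_apply]
  exact Equiv.tsum_eq e (fun a => (Fintype.card α : ℝ≥0∞)⁻¹ * f a x)

lemma inner_eq {ℓ q : ℕ} [Nonempty (Fin ℓ)] (b b' : Fin q → Bool) (r : Fin q → Fin ℓ)
    (hr : Function.Injective r) :
    ((PMF.uniformOfFintype (Fin ℓ → Bool)).bind fun u =>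
      PMF.pure (fun j => (r j, xor (u (r j)) (b j)))) =
    ((PMF.uniformOfFintype (Fin ℓ → Bool)).bind fun u =>
      PMF.pure (fun j => (r j, xor (u (r j)) (b' j)))) := by
  classical
  set d : Fin ℓ → Bool := fun x =>
    if h : ∃ j, r j = x then xor (b h.choose) (b' h.choose) else false with hd_def
  have hd : ∀ j, d (r j) = xor (b j) (b' j) := by
    intro j
    have h : ∃ j', r j' = r j := ⟨j, rfl⟩
    have hj : h.choose = j := hr h.choose_spec
    simp only [hd_def, dif_pos h, hj]
  have hinv : Function.Involutive (fun (u : Fin ℓ → Bool) => fun x => xor (u x) (d x)) := by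
    intro u; funext x; simp [Bool.xor_assoc]
  set e := hinv.toPerm
  rw [← uniform_bind_comp_equiv e]
  congr 1; funext u; congr 1; funext j
  have he : e u (r j) = xor (u (r j)) (d (r j)) := rfl
  simp only [he, hd j]
  cases u (r j) <;> cases b j <;> cases b' j <;> rfl

open Classical in
lemma count_noninj (ℓ q : ℕ) :
    ((Finset.univ.filter fun r : Fin q → Fin ℓ => ¬ Function.Injective r).card) * ℓ ≤ q ^ 2 * ℓ ^ q := by
  classical
  rcases Nat.eq_zero_or_pos q with hq | hq
  · subst hq
    have hinj : ∀ r : Fin 0 → Fin ℓ, Function.Injective r :=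
      fun r a => (Nat.not_lt_zero _ a.2).elim
    have : (Finset.univ.filter fun r : Fin 0 → Fin ℓ => ¬ Function.Injective r) = ∅ := by
      simp [Finset.filter_eq_empty_iff, hinj]
    rw [Finset.card_eq_zero.mpr this]
    simp
  · have hsub : (Finset.univ.filter fun r : Fin q → Fin ℓ => ¬ Function.Injective r) ⊆
        ((Finset.univ : Finset (Fin q)).offDiag).biUnion
          (fun p => Finset.univ.filter fun r => r p.1 = r p.2) := by
      intro r hr
      simp only [Finset.mem_filter, Function.Injective, not_forall] at hr
      obtain ⟨-, i, j, hij, hne⟩ := hr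
      refine Finset.mem_biUnion.2 ⟨(i, j), ?_, ?_⟩
      · simp [Finset.mem_offDiag, hne]
      · simp [hij]
    have hcard : ∀ p : Fin q × Fin q, p ∈ (Finset.univ : Finset (Fin q)).offDiag →
        (Finset.univ.filter fun r : Fin q → Fin ℓ => r p.1 = r p.2).card ≤ ℓ ^ (q - 1) := by
      rintro ⟨i, j⟩ hp
      have hij : i ≠ j := by simpa [Finset.mem_offDiag] using hp
      have hle := Finset.card_le_card_of_injOn
        (s := Finset.univ.filter fun r : Fin q → Fin ℓ => r i = r j)
        (t := (Finset.univ : Finset ({k : Fin q // k ≠ j} → Fin ℓ)))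
        (fun r => fun k => r k.val) (fun a _ => Finset.mem_univ _) ?_
      · calc _ ≤ _ := hle
          _ = ℓ ^ (q - 1) := by
            simp [Finset.card_univ, Fintype.card_fun, Fintype.card_subtype_compl]
      · intro r₁ h₁ r₂ h₂ h
        simp only [Finset.coe_filter, Set.mem_setOf_eq] at h₁ h₂
        funext k
        by_cases hk : k = j
        · subst hk
          have hi := congrFun h ⟨i, hij⟩
          simpa [← h₁.2, ← h₂.2] using hi
        · exact congrFun h ⟨k, hk⟩
    calc _ ≤ (((Finset.univ : Finset (Fin q)).offDiag.biUnion fun p =>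
            Finset.univ.filter fun r : Fin q → Fin ℓ => r p.1 = r p.2).card) * ℓ :=
          Nat.mul_le_mul_right _ (Finset.card_le_card hsub)
      _ ≤ (∑ p ∈ (Finset.univ : Finset (Fin q)).offDiag,
            (Finset.univ.filter fun r : Fin q → Fin ℓ => r p.1 = r p.2).card) * ℓ :=
          Nat.mul_le_mul_right _ Finset.card_biUnion_le
      _ ≤ (∑ _p ∈ (Finset.univ : Finset (Fin q)).offDiag, ℓ ^ (q - 1)) * ℓ :=
          Nat.mul_le_mul_right _ (Finset.sum_le_sum hcard)
      _ = (Finset.univ : Finset (Fin q)).offDiag.card * ℓ ^ (q - 1) * ℓ := by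
          rw [Finset.sum_const, smul_eq_mul]
      _ ≤ q ^ 2 * (ℓ ^ (q - 1) * ℓ) := by
          rw [mul_assoc]
          apply Nat.mul_le_mul_right
          have : (Finset.univ : Finset (Fin q)).offDiag.card = q * q - q := by
            simp [Finset.offDiag_card]
          rw [this, sq]
          omega
      _ = q ^ 2 * ℓ ^ q := by
          have hq1 : q - 1 + 1 = q := by omega
          rw [← pow_succ, hq1]


/-- The distribution of the `q` ciphertexts produced by the one-time-pad scheme
`Π_LocalEnc` with a truly random pad: sample a uniform pad `u : Fin ℓ → Bool` and,
independently, uniform positions `r : Fin q → Fin ℓ`, and output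
`fun j => (r j, u (r j) ⊕ b j)`. -/
noncomputable def otpCiphertexts (ℓ q : ℕ) (hℓ : 1 ≤ ℓ) (b : Fin q → Bool) :
    PMF (Fin q → Fin ℓ × Bool) :=
  letI : Nonempty (Fin ℓ) := ⟨⟨0, hℓ⟩⟩
  (PMF.uniformOfFintype (Fin ℓ → Bool)).bind fun u =>
    (PMF.uniformOfFintype (Fin q → Fin ℓ)).bind fun r =>
      PMF.pure (fun j => (r j, xor (u (r j)) (b j)))

/-- Statistical security of `Π_LocalEnc`: the ciphertext distributions for any two
message vectors are within statistical distance `q² / ℓ`. -/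
theorem otp_statistical_security
    (ℓ q : ℕ) (hℓ : 1 ≤ ℓ) (b b' : Fin q → Bool) (T : Set (Fin q → Fin ℓ × Bool)) :
    |(∑' x : T, otpCiphertexts ℓ q hℓ b x).toReal -
        (∑' x : T, otpCiphertexts ℓ q hℓ b' x).toReal| ≤ (q : ℝ) ^ 2 / ℓ := by
  classical
  letI : Nonempty (Fin ℓ) := ⟨⟨0, hℓ⟩⟩
  set F : (Fin q → Bool) → (Fin q → Fin ℓ) → PMF (Fin q → Fin ℓ × Bool) := fun c r =>
    (PMF.uniformOfFintype (Fin ℓ → Bool)).bind fun u =>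
      PMF.pure (fun j => (r j, xor (u (r j)) (c j))) with hF
  set R := PMF.uniformOfFintype (Fin q → Fin ℓ) with hRdef
  have hswap : ∀ c, otpCiphertexts ℓ q hℓ c = R.bind (F c) := by
    intro c
    unfold otpCiphertexts
    exact PMF.bind_comm _ _ _
  set S : (Fin q → Bool) → (Fin q → Fin ℓ) → ℝ≥0∞ := fun c r => ∑' x : T, F c r x with hSdef
  have hS1 : ∀ c r, S c r ≤ 1 := fun c r =>
    le_trans (ENNReal.tsum_comp_le_tsum_of_injective Subtype.val_injective _) (F c r).tsum_coe.le
  have hμ : ∀ c, (∑' x : T, (otpCiphertexts ℓ q hℓ c) x) = ∑ r : Fin q → Fin ℓ, R r * S c r := by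
    intro c
    rw [hswap]
    calc (∑' x : T, (R.bind (F c)) x) = ∑' x : T, ∑' r, R r * F c r x := by
          simp only [PMF.bind_apply]
      _ = ∑' r, ∑' x : T, R r * F c r x := ENNReal.tsum_comm
      _ = ∑' r, R r * S c r := by
          simp only [ENNReal.tsum_mul_left, hSdef]
      _ = ∑ r : Fin q → Fin ℓ, R r * S c r := tsum_fintype _
  have hSeq : ∀ r, Function.Injective r → S b r = S b' r := fun r hr => by
    simp only [hSdef, hF, inner_eq b b' r hr]
  set D := Finset.univ.filter (fun r : Fin q → Fin ℓ => ¬ Function.Injective r) with hDdef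
  set P : ℝ≥0∞ := ∑ r ∈ D, R r with hPdef
  have hP1 : P ≤ 1 := by
    calc P ≤ ∑ r : Fin q → Fin ℓ, R r := Finset.sum_le_sum_of_subset (Finset.subset_univ _)
      _ = ∑' r, R r := (tsum_fintype _).symm
      _ = 1 := R.tsum_coe
  have hkey : ∀ c c', (∀ r, Function.Injective r → S c r = S c' r) →
      (∑ r : Fin q → Fin ℓ, R r * S c r) ≤ (∑ r : Fin q → Fin ℓ, R r * S c' r) + P := by
    intro c c' hcc
    rw [← Finset.sum_filter_add_sum_filter_not Finset.univ
      (fun r : Fin q → Fin ℓ => Function.Injective r) (fun r => R r * S c r)]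
    apply add_le_add
    · calc (∑ r ∈ Finset.univ.filter (fun r : Fin q → Fin ℓ => Function.Injective r), R r * S c r)
          = ∑ r ∈ Finset.univ.filter (fun r : Fin q → Fin ℓ => Function.Injective r), R r * S c' r :=
            Finset.sum_congr rfl (fun r hr => by rw [hcc r (Finset.mem_filter.1 hr).2])
        _ ≤ ∑ r : Fin q → Fin ℓ, R r * S c' r :=
            Finset.sum_le_sum_of_subset (Finset.filter_subset _ _)
    · calc (∑ r ∈ D, R r * S c r) ≤ ∑ r ∈ D, R r * 1 :=
            Finset.sum_le_sum (fun r _ => mul_le_mul_right (hS1 c r) _)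
        _ = P := by simp [hPdef]
  have hμle : ∀ c, (∑' x : T, (otpCiphertexts ℓ q hℓ c) x) ≤ 1 := fun c =>
    le_trans (ENNReal.tsum_comp_le_tsum_of_injective Subtype.val_injective _)
      (otpCiphertexts ℓ q hℓ c).tsum_coe.le
  have hne : ∀ c, (∑' x : T, (otpCiphertexts ℓ q hℓ c) x) ≠ ⊤ :=
    fun c => ne_top_of_le_ne_top ENNReal.one_ne_top (hμle c)
  have hPne : P ≠ ⊤ := ne_top_of_le_ne_top ENNReal.one_ne_top hP1
  have habs : ∀ c c', (∀ r, Function.Injective r → S c r = S c' r) →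
      (∑' x : T, (otpCiphertexts ℓ q hℓ c) x).toReal -
        (∑' x : T, (otpCiphertexts ℓ q hℓ c') x).toReal ≤ P.toReal := by
    intro c c' hcc
    have h := hkey c c' hcc
    rw [← hμ, ← hμ] at h
    have := ENNReal.toReal_mono (ENNReal.add_ne_top.2 ⟨hne c', hPne⟩) h
    rw [ENNReal.toReal_add (hne c') hPne] at this
    linarith
  have hPbound : P.toReal ≤ (q : ℝ) ^ 2 / ℓ := by
    have hPval : P = (D.card : ℝ≥0∞) * ((ℓ : ℝ≥0∞) ^ q)⁻¹ := by
      simp [hPdef, hRdef, PMF.uniformOfFintype_apply, Finset.sum_const, Fintype.card_fun]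
    have hℓR : (0:ℝ) < ℓ := by exact_mod_cast hℓ
    rw [hPval, ENNReal.toReal_mul, ENNReal.toReal_inv]
    simp only [ENNReal.toReal_natCast, ENNReal.toReal_pow]
    rw [← div_eq_mul_inv, div_le_div_iff₀ (by positivity) hℓR]
    have := count_noninj ℓ q
    calc (D.card : ℝ) * ℓ = ((D.card * ℓ : ℕ) : ℝ) := by push_cast; ring
      _ ≤ ((q ^ 2 * ℓ ^ q : ℕ) : ℝ) := by exact_mod_cast this
      _ = (q : ℝ) ^ 2 * (ℓ : ℝ) ^ q := by push_cast; ring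
  have h1 := habs b b' hSeq
  have h2 := habs b' b (fun r hr => (hSeq r hr).symm)
  rw [abs_sub_le_iff]
  constructor <;> linarith
end

section
/- Let X be a type, m ≥ 1, D : Fin m → X a database, k : ℕ, and q : Fin k → (X → Bool) a tuple of counting queries. Let α, β be reals with 0 ≤ α < 1/2, and let μ : PMF (Fin k → ℝ) be a distribution over answer vectors such that the probability under μ of the event {a | ∀ j : Fin k, |a j − q_j(D)| ≤ α} is at least 1 − β. Then the probability under μ of the event {a | ∃ j : Fin k, ∃ b : Bool, (∀ i : Fin m, q_j (D i) = b) ∧ decide (1/2 ≤ a j) ≠ b} is at most β. -/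
/-!
If all rows of `D` give the same bit `b` on query `q`, then the query value is exactly `b`
(as `0` or `1`), so any answer within `α < 1/2` of it rounds to `b`. Hence every answer vector
in the failure event is inaccurate, and the failure event has probability at most that of
inaccuracy, which is at most `β`.
-/

open scoped ENNReal

noncomputable def countingQueryValue {X : Type*} {m : ℕ} (q : X → Bool) (D : Fin m → X) : ℝ :=
  ((Finset.univ.filter fun i : Fin m => q (D i) = true).card : ℝ) / m

namespace PMF

variable {α : Type*} (p : PMF α)

theorem tsum_subtype_add_tsum_subtype_compl (s : Set α) :
    (∑' a : s, p a) + ∑' a : ↥sᶜ, p a = 1 :=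
  (ENNReal.summable.tsum_add_tsum_compl ENNReal.summable).trans p.tsum_coe

theorem tsum_subtype_le_ofReal_of_subset_compl {s t : Set α} (hts : t ⊆ sᶜ) {β : ℝ}
    (hs : ENNReal.ofReal (1 - β) ≤ ∑' a : s, p a) :
    ∑' a : t, p a ≤ ENNReal.ofReal β := by
  have hcompl : ∑' a : ↥sᶜ, p a ≤ 1 - ENNReal.ofReal (1 - β) := by
    rw [← p.tsum_subtype_add_tsum_subtype_compl s]
    exact ENNReal.le_sub_of_add_le_left ENNReal.ofReal_ne_top (add_le_add_left hs _)
  calc ∑' a : t, p a ≤ ∑' a : ↥sᶜ, p a := ENNReal.tsum_mono_subtype _ hts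
    _ ≤ 1 - ENNReal.ofReal (1 - β) := hcompl
    _ ≤ ENNReal.ofReal β := by
      rw [tsub_le_iff_right, ← ENNReal.ofReal_one]
      simpa using ENNReal.ofReal_add_le (p := β) (q := 1 - β)

end PMF

section CountingQuery

variable {X : Type*} {m : ℕ} (q : X → Bool) (D : Fin m → X)

theorem countingQueryValue_eq_zero_of_forall_false (hq : ∀ i, q (D i) = false) :
    countingQueryValue q D = 0 := by
  simp [countingQueryValue, hq]

theorem countingQueryValue_eq_one_of_forall_true (hm : m ≠ 0) (hq : ∀ i, q (D i) = true) :
    countingQueryValue q D = 1 := by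
  simp [countingQueryValue, hq, hm]

theorem decide_half_le_eq_of_forall_eq_of_abs_sub_le (hm : m ≠ 0) {b : Bool}
    (hq : ∀ i, q (D i) = b) {a α : ℝ} (hα : α < 1 / 2)
    (ha : |a - countingQueryValue q D| ≤ α) :
    decide ((1 : ℝ) / 2 ≤ a) = b := by
  cases b
  · rw [countingQueryValue_eq_zero_of_forall_false q D hq, sub_zero] at ha
    simpa using (abs_le.mp ha).2.trans_lt hα
  · rw [countingQueryValue_eq_one_of_forall_true q D hm hq] at ha
    simpa using show (1 : ℝ) / 2 ≤ a by linarith [(abs_le.mp ha).1]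

end CountingQuery

theorem accurate_implies_available_general
    {X : Type*} (m : ℕ) (hm : 1 ≤ m) (D : Fin m → X) (k : ℕ) (q : Fin k → X → Bool)
    (α β : ℝ) (hα : α < 1 / 2) (μ : PMF (Fin k → ℝ))
    (hacc : ENNReal.ofReal (1 - β) ≤
      ∑' a : {a : Fin k → ℝ // ∀ j : Fin k, |a j - countingQueryValue (q j) D| ≤ α}, μ a.1) :
    ∑' a : {a : Fin k → ℝ // ∃ j : Fin k, ∃ b : Bool,
        (∀ i : Fin m, q j (D i) = b) ∧ decide ((1 : ℝ) / 2 ≤ a j) ≠ b}, μ a.1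
      ≤ ENNReal.ofReal β := by
  refine μ.tsum_subtype_le_ofReal_of_subset_compl
    (s := {a | ∀ j, |a j - countingQueryValue (q j) D| ≤ α}) ?_ hacc
  rintro a ⟨j, b, hb, hround⟩ haccurate
  exact hround <| decide_half_le_eq_of_forall_eq_of_abs_sub_le (q j) D (by omega) hb hα
    (haccurate j)

/-- Claim 4.2: if a distribution over answer vectors is `α`-accurate (with `α < 1/2`)
except with probability `β`, then except with probability `β` the rounded answers agree
with `b` on every query on which all database rows evaluate to the same bit `b`. -/
theorem accurate_implies_available
    {X : Type*} (m : ℕ) (hm : 1 ≤ m) (D : Fin m → X) (k : ℕ) (q : Fin k → X → Bool)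
    (α β : ℝ) (hα0 : 0 ≤ α) (hα : α < 1 / 2) (μ : PMF (Fin k → ℝ))
    (hacc : ENNReal.ofReal (1 - β) ≤
      ∑' a : {a : Fin k → ℝ // ∀ j : Fin k, |a j - countingQueryValue (q j) D| ≤ α}, μ a.1) :
    ∑' a : {a : Fin k → ℝ // ∃ j : Fin k, ∃ b : Bool,
        (∀ i : Fin m, q j (D i) = b) ∧ decide ((1 : ℝ) / 2 ≤ a j) ≠ b}, μ a.1
      ≤ ENNReal.ofReal β :=
  accurate_implies_available_general m hm D k q α β hα μ hacc
end
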